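/- arXiv:1507.03783 — 3 statements merged into one kernel-verified Lean document; each statement's English description precedes it below -/
import Mathlib

section
/- Two pairs (P,ℓ) and (P',ℓ') in V_1 × V_2 lie in the same orbit of the diagonal action of the Heisenberg group H' if and only if P·ℓ = P'·ℓ'. -/
/-- The matrix `g_{a,b,c}` of the Heisenberg group modulo `p`. -/
def heisMat (p : ℕ) (a b c : ZMod p) : Matrix (Fin 3) (Fin 3) (ZMod p) :=
  !![1, a, b + a * c; 0, 1, c; 0, 0, 1]

lemma heisMat_inv (p : ℕ) (a b c : ZMod p) :
    (heisMat p a b c)⁻¹ = !![1, -a, -b; 0, 1, -c; 0, 0, 1] := by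
  apply Matrix.inv_eq_right_inv
  ext i j
  fin_cases i <;> fin_cases j <;>
    simp [heisMat, Matrix.mul_apply, Fin.sum_univ_three, Matrix.vecHead, Matrix.vecTail] <;> ring

/-- Two pairs `(P,ℓ)` and `(P',ℓ')` in `V₁ × V₂` lie in the same orbit of the
diagonal action of the Heisenberg group iff `P·ℓ = P'·ℓ'`, where `P = (1,x₁,x₂)`
acts by right multiplication, `ℓ = (u₁,u₂,-1)` by left multiplication by the
inverse, and `·` is the dot product. -/
theorem stmt6 (p : ℕ) (hp : p.Prime) (hodd : Odd p)
    (x₁ x₂ y₁ y₂ u₁ u₂ v₁ v₂ : ZMod p) :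
    (∃ a b c : ZMod p,
        Matrix.vecMul ![1, x₁, x₂] (heisMat p a b c) = ![1, y₁, y₂] ∧
        Matrix.mulVec (heisMat p a b c)⁻¹ ![u₁, u₂, -1] = ![v₁, v₂, -1]) ↔
      dotProduct ![1, x₁, x₂] ![u₁, u₂, -1] =
        dotProduct ![1, y₁, y₂] ![v₁, v₂, -1] := by
  constructor
  · rintro ⟨a, b, c, h1, h2⟩
    rw [heisMat_inv] at h2
    have e1 := congrFun h1 1
    have e2 := congrFun h1 2
    have f1 := congrFun h2 0
    have f2 := congrFun h2 1
    simp [heisMat, Matrix.vecMul, Matrix.mulVec, dotProduct,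
      Fin.sum_univ_three] at e1 e2 f1 f2 ⊢
    rw [← e1, ← e2, ← f1, ← f2]; ring
  · intro h
    simp [dotProduct, Fin.sum_univ_three] at h
    refine ⟨y₁ - x₁, y₂ - y₁ * v₂ + y₁ * u₂ - x₂, v₂ - u₂, ?_, ?_⟩
    · funext i
      fin_cases i <;>
        simp [heisMat, Matrix.vecMul, dotProduct, Fin.sum_univ_three,
          Matrix.vecHead, Matrix.vecTail] <;> ring
    · rw [heisMat_inv]
      funext i
      fin_cases i <;>
        simp [Matrix.mulVec, dotProduct, Fin.sum_univ_three] <;>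
        linear_combination h
end

section
/- The group H generated by all translations t_{a,b} on Ω = P ∪ L together with φ acts on Ω with exactly two orbits, namely P and L, and has order p^3; moreover every element of H is uniquely of the form φ^u ∘ t_{a,b} with a,b,u ∈ Z_p. -/
/-- `Ω = P ∪ L` : points and lines of the biaffine plane over `Z_p`. -/
abbrev BiaffOmega (p : ℕ) := (ZMod p × ZMod p) ⊕ (ZMod p × ZMod p)

/-- The translation `t_{a,b}` : `[x,y] ↦ [x+a,y+b]` on points,
`(k,q) ↦ (k, b+q-ak)` on lines. -/
def tPerm (p : ℕ) (a b : ZMod p) : Equiv.Perm (BiaffOmega p) where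
  toFun z := match z with
    | Sum.inl (x, y) => Sum.inl (x + a, y + b)
    | Sum.inr (k, q) => Sum.inr (k, b + q - a * k)
  invFun z := match z with
    | Sum.inl (x, y) => Sum.inl (x - a, y - b)
    | Sum.inr (k, q) => Sum.inr (k, q - b + a * k)
  left_inv := by rintro (⟨x, y⟩ | ⟨k, q⟩) <;> simp <;> ring
  right_inv := by rintro (⟨x, y⟩ | ⟨k, q⟩) <;> simp <;> ring

/-- The permutation `φ` : `[x,y] ↦ [x,y-x]` on points, `(k,q) ↦ (k-1,q)` on
lines. -/
def phiPerm (p : ℕ) : Equiv.Perm (BiaffOmega p) where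
  toFun z := match z with
    | Sum.inl (x, y) => Sum.inl (x, y - x)
    | Sum.inr (k, q) => Sum.inr (k - 1, q)
  invFun z := match z with
    | Sum.inl (x, y) => Sum.inl (x, y + x)
    | Sum.inr (k, q) => Sum.inr (k + 1, q)
  left_inv := by rintro (⟨x, y⟩ | ⟨k, q⟩) <;> simp
  right_inv := by rintro (⟨x, y⟩ | ⟨k, q⟩) <;> simp

/-- The group `H` generated by the translations and `φ`. -/
def biaffH (p : ℕ) : Subgroup (Equiv.Perm (BiaffOmega p)) :=
  Subgroup.closure ({g | ∃ a b : ZMod p, g = tPerm p a b} ∪ {phiPerm p})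

/-- Explicit form of `φ^u ∘ t_{a,b}`. -/
def Ebiaff (p : ℕ) (a b u : ZMod p) : Equiv.Perm (BiaffOmega p) where
  toFun z := match z with
    | Sum.inl (x, y) => Sum.inl (x + a, y + b - u * (x + a))
    | Sum.inr (k, q) => Sum.inr (k - u, b + q - a * k)
  invFun z := match z with
    | Sum.inl (x, y) => Sum.inl (x - a, y - b + u * x)
    | Sum.inr (k, q) => Sum.inr (k + u, q - b + a * (k + u))
  left_inv := by rintro (⟨x, y⟩ | ⟨k, q⟩) <;> simp <;> ring
  right_inv := by rintro (⟨x, y⟩ | ⟨k, q⟩) <;> simp <;> ring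

lemma Ebiaff_mul (p : ℕ) (a b u c d v : ZMod p) :
    Ebiaff p a b u * Ebiaff p c d v = Ebiaff p (a + c) (b + d + v * a) (u + v) := by
  ext z
  rcases z with ⟨x, y⟩ | ⟨k, q⟩ <;>
    simp [Ebiaff, Equiv.Perm.mul_apply] <;> constructor <;> ring

lemma Ebiaff_zero (p : ℕ) : Ebiaff p 0 0 0 = 1 := by
  ext z; rcases z with ⟨x, y⟩ | ⟨k, q⟩ <;> simp [Ebiaff]

lemma tPerm_eq (p : ℕ) (a b : ZMod p) : tPerm p a b = Ebiaff p a b 0 := by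
  ext z; rcases z with ⟨x, y⟩ | ⟨k, q⟩ <;> simp [Ebiaff, tPerm]

lemma phiPerm_eq (p : ℕ) : phiPerm p = Ebiaff p 0 0 1 := by
  ext z; rcases z with ⟨x, y⟩ | ⟨k, q⟩ <;> simp [Ebiaff, phiPerm]

lemma phiPerm_pow (p : ℕ) (n : ℕ) : (phiPerm p) ^ n = Ebiaff p 0 0 (n : ZMod p) := by
  induction n with
  | zero => simp [Ebiaff_zero]
  | succ n ih =>
    rw [pow_succ, ih, phiPerm_eq, Ebiaff_mul]
    push_cast; ring_nf

lemma Ebiaff_inj (p : ℕ) {a b u c d v : ZMod p} (h : Ebiaff p a b u = Ebiaff p c d v) :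
    a = c ∧ b = d ∧ u = v := by
  have h1 := congrArg (fun g : Equiv.Perm (BiaffOmega p) => g (Sum.inl (0, 0))) h
  have h2 := congrArg (fun g : Equiv.Perm (BiaffOmega p) => g (Sum.inr (0, 0))) h
  simp [Ebiaff] at h1 h2
  obtain ⟨hac, _⟩ := h1
  obtain ⟨huv, hbd⟩ := h2
  exact ⟨hac, hbd, huv⟩

def biaffK (p : ℕ) : Subgroup (Equiv.Perm (BiaffOmega p)) where
  carrier := {g | ∃ a b u : ZMod p, g = Ebiaff p a b u}
  one_mem' := ⟨0, 0, 0, (Ebiaff_zero p).symm⟩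
  mul_mem' := by
    rintro _ _ ⟨a, b, u, rfl⟩ ⟨c, d, v, rfl⟩
    exact ⟨_, _, _, (Ebiaff_mul p a b u c d v)⟩
  inv_mem' := by
    rintro _ ⟨a, b, u, rfl⟩
    refine ⟨-a, u * a - b, -u, (eq_inv_of_mul_eq_one_left ?_).symm⟩
    rw [Ebiaff_mul, ← Ebiaff_zero p]; ring_nf

lemma Ebiaff_eq_pow (p : ℕ) [NeZero p] (a b u : ZMod p) :
    Ebiaff p a b u = (phiPerm p) ^ u.val * tPerm p a b := by
  rw [phiPerm_pow, ZMod.natCast_val, ZMod.cast_id, tPerm_eq, Ebiaff_mul]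
  ring_nf

lemma biaffH_eq (p : ℕ) [NeZero p] : biaffH p = biaffK p := by
  apply le_antisymm
  · rw [biaffH, Subgroup.closure_le]
    rintro g (⟨a, b, rfl⟩ | rfl)
    · exact ⟨a, b, 0, tPerm_eq p a b⟩
    · exact ⟨0, 0, 1, phiPerm_eq p⟩
  · rintro g ⟨a, b, u, rfl⟩
    have h1 : tPerm p a b ∈ biaffH p :=
      Subgroup.subset_closure (Or.inl ⟨a, b, rfl⟩)
    have h2 : phiPerm p ∈ biaffH p :=
      Subgroup.subset_closure (Or.inr rfl)
    rw [Ebiaff_eq_pow]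
    exact mul_mem (pow_mem h2 _) h1

/-- `H = ⟨t_{a,b}, φ⟩` has order `p^3`, acts on `Ω = P ∪ L` with exactly the
two orbits `P` and `L`, and every element of `H` is uniquely of the form
`φ^u ∘ t_{a,b}`. -/
theorem stmt14 (p : ℕ) (hp : p.Prime) (hodd : Odd p) :
    Nat.card (biaffH p) = p ^ 3 ∧
    (∀ P : ZMod p × ZMod p,
      MulAction.orbit (biaffH p) (Sum.inl P : BiaffOmega p) =
        Set.range Sum.inl) ∧
    (∀ ℓ : ZMod p × ZMod p,
      MulAction.orbit (biaffH p) (Sum.inr ℓ : BiaffOmega p) =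
        Set.range Sum.inr) ∧
    (∀ h ∈ biaffH p, ∃! w : ZMod p × ZMod p × ZMod p,
      h = (phiPerm p) ^ (w.2.2.val) * tPerm p w.1 w.2.1) := by
  haveI : NeZero p := ⟨hp.pos.ne'⟩
  refine ⟨?_, ?_, ?_, ?_⟩
  · -- cardinality
    have e : (ZMod p × ZMod p × ZMod p) ≃ (biaffK p) := by
      refine Equiv.ofBijective
        (fun w => ⟨Ebiaff p w.1 w.2.1 w.2.2, ⟨w.1, w.2.1, w.2.2, rfl⟩⟩) ⟨?_, ?_⟩
      · rintro ⟨a, b, u⟩ ⟨c, d, v⟩ h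
        simp only [Subtype.mk_eq_mk] at h
        obtain ⟨h1, h2, h3⟩ := Ebiaff_inj p (congrArg Subtype.val h)
        simp [Prod.ext_iff, h1, h2, h3]
      · rintro ⟨g, a, b, u, rfl⟩
        exact ⟨(a, b, u), rfl⟩
    rw [biaffH_eq, ← Nat.card_congr e]
    simp [Nat.card_prod, Nat.card_zmod]
    ring
  · -- point orbits
    intro P
    ext z
    rw [MulAction.mem_orbit_iff]
    constructor
    · rintro ⟨⟨g, hg⟩, rfl⟩
      rw [biaffH_eq] at hg
      obtain ⟨a, b, u, rfl⟩ := hg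
      exact ⟨_, rfl⟩
    · rintro ⟨⟨x, y⟩, rfl⟩
      refine ⟨⟨Ebiaff p (x - P.1) (y - P.2) 0, by rw [biaffH_eq]; exact ⟨_, _, _, rfl⟩⟩, ?_⟩
      show Ebiaff p (x - P.1) (y - P.2) 0 (Sum.inl P) = _
      simp [Ebiaff]
  · -- line orbits
    intro ℓ
    ext z
    rw [MulAction.mem_orbit_iff]
    constructor
    · rintro ⟨⟨g, hg⟩, rfl⟩
      rw [biaffH_eq] at hg
      obtain ⟨a, b, u, rfl⟩ := hg
      exact ⟨_, rfl⟩
    · rintro ⟨⟨k, q⟩, rfl⟩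
      refine ⟨⟨Ebiaff p 0 (q - ℓ.2) (ℓ.1 - k), by rw [biaffH_eq]; exact ⟨_, _, _, rfl⟩⟩, ?_⟩
      show Ebiaff p 0 (q - ℓ.2) (ℓ.1 - k) (Sum.inr ℓ) = _
      simp [Ebiaff]
  · -- unique form
    intro h hh
    rw [biaffH_eq] at hh
    obtain ⟨a, b, u, rfl⟩ := hh
    refine ⟨(a, b, u), ?_, ?_⟩
    · exact Ebiaff_eq_pow p a b u
    · rintro ⟨c, d, v⟩ hy
      simp only at hy
      rw [← Ebiaff_eq_pow] at hy
      obtain ⟨h1, h2, h3⟩ := Ebiaff_inj p hy.symm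
      simp [Prod.ext_iff, h1, h2, h3]
end

section
/- The number of 2-orbits of the intransitive action of H on Ω = P ∪ L equals 6p - 2; explicitly, the relations A_i (i ∈ Z_p), B_i (i ∈ Z_p^*), C_i (i ∈ Z_p), D_i (i ∈ Z_p^*), E_i (i ∈ Z_p), F_i (i ∈ Z_p) partition Ω × Ω and each is invariant under the diagonal action of H. -/
/-- The six kinds of basic relations. -/
inductive RelKind | A | B | C | D | E | F
  deriving DecidableEq

open RelKind in
/-- The relations `A_i, B_i, C_i, D_i, E_i, F_i` on `Ω`. -/
def biaffRel (p : ℕ) : RelKind → ZMod p → Set (BiaffOmega p × BiaffOmega p)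
  | A, i => {z | ∃ x y₁ y₂, z = (Sum.inl (x, y₁), Sum.inl (x, y₂)) ∧ y₂ - y₁ = i}
  | B, i => {z | ∃ x₁ y₁ x₂ y₂,
      z = (Sum.inl (x₁, y₁), Sum.inl (x₂, y₂)) ∧ x₂ - x₁ = i}
  | C, i => {z | ∃ k q₁ q₂, z = (Sum.inr (k, q₁), Sum.inr (k, q₂)) ∧ q₂ - q₁ = i}
  | D, i => {z | ∃ k₁ q₁ k₂ q₂,
      z = (Sum.inr (k₁, q₁), Sum.inr (k₂, q₂)) ∧ k₂ - k₁ = i}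
  | E, i => {z | ∃ x y k q, z = (Sum.inl (x, y), Sum.inr (k, q)) ∧ k * x + q - y = i}
  | F, i => {z | ∃ x y k q, z = (Sum.inr (k, q), Sum.inl (x, y)) ∧ y - k * x - q = i}

open RelKind

instance : Fintype RelKind := ⟨{A, B, C, D, E, F}, fun x => by cases x <;> simp⟩

lemma card_relKind : Fintype.card RelKind = 6 := rfl

def biaffValid (p : ℕ) (w : RelKind × ZMod p) : Prop :=
  (w.1 = B ∨ w.1 = D) → w.2 ≠ 0

instance (p : ℕ) : DecidablePred (biaffValid p) := fun w => by
  unfold biaffValid; infer_instance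

def biaffCl (p : ℕ) : BiaffOmega p × BiaffOmega p → RelKind × ZMod p
  | (Sum.inl (x₁, y₁), Sum.inl (x₂, y₂)) =>
      if x₁ = x₂ then (A, y₂ - y₁) else (B, x₂ - x₁)
  | (Sum.inr (k₁, q₁), Sum.inr (k₂, q₂)) =>
      if k₁ = k₂ then (C, q₂ - q₁) else (D, k₂ - k₁)
  | (Sum.inl (x, y), Sum.inr (k, q)) => (E, k * x + q - y)
  | (Sum.inr (k, q), Sum.inl (x, y)) => (F, y - k * x - q)

lemma cl_valid (p : ℕ) (z : BiaffOmega p × BiaffOmega p) :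
    biaffValid p (biaffCl p z) := by
  obtain ⟨⟨x₁,y₁⟩|⟨k₁,q₁⟩, ⟨x₂,y₂⟩|⟨k₂,q₂⟩⟩ := z <;>
      simp only [biaffCl, biaffValid]
  · split_ifs with h <;> simp_all [sub_eq_zero, eq_comm]
  · rintro (h|h) <;> simp_all
  · rintro (h|h) <;> simp_all
  · split_ifs with h <;> simp_all [sub_eq_zero, eq_comm]

lemma cl_mem (p : ℕ) (z : BiaffOmega p × BiaffOmega p) :
    z ∈ biaffRel p (biaffCl p z).1 (biaffCl p z).2 := by
  obtain ⟨⟨x₁,y₁⟩|⟨k₁,q₁⟩, ⟨x₂,y₂⟩|⟨k₂,q₂⟩⟩ := z <;> simp only [biaffCl]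
  · split_ifs with h
    · subst h; exact ⟨x₁, y₁, y₂, rfl, rfl⟩
    · exact ⟨x₁, y₁, x₂, y₂, rfl, rfl⟩
  · exact ⟨x₁, y₁, k₂, q₂, rfl, rfl⟩
  · exact ⟨x₂, y₂, k₁, q₁, rfl, rfl⟩
  · split_ifs with h
    · subst h; exact ⟨k₁, q₁, q₂, rfl, rfl⟩
    · exact ⟨k₁, q₁, k₂, q₂, rfl, rfl⟩

lemma cl_eq_of_mem (p : ℕ) {z : BiaffOmega p × BiaffOmega p} {w : RelKind × ZMod p}
    (hv : biaffValid p w) (hm : z ∈ biaffRel p w.1 w.2) : w = biaffCl p z := by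
  obtain ⟨k, i⟩ := w
  cases k
  · obtain ⟨x, y₁, y₂, rfl, rfl⟩ := hm; simp [biaffCl]
  · obtain ⟨x₁, y₁, x₂, y₂, rfl, rfl⟩ := hm
    have : ¬ x₁ = x₂ := by
      have := hv (Or.inl rfl); intro h; subst h; simp at this
    simp [biaffCl, this]
  · obtain ⟨k, q₁, q₂, rfl, rfl⟩ := hm; simp [biaffCl]
  · obtain ⟨k₁, q₁, k₂, q₂, rfl, rfl⟩ := hm
    have : ¬ k₁ = k₂ := by
      have := hv (Or.inr rfl); intro h; subst h; simp at this
    simp [biaffCl, this]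
  · obtain ⟨x, y, k, q, rfl, rfl⟩ := hm; simp [biaffCl]
  · obtain ⟨x, y, k, q, rfl, rfl⟩ := hm; simp [biaffCl]

lemma cl_t (p : ℕ) (a b : ZMod p) (z : BiaffOmega p × BiaffOmega p) :
    biaffCl p (tPerm p a b z.1, tPerm p a b z.2) = biaffCl p z := by
  obtain ⟨⟨x₁,y₁⟩|⟨k₁,q₁⟩, ⟨x₂,y₂⟩|⟨k₂,q₂⟩⟩ := z <;>
    simp only [tPerm, Equiv.coe_fn_mk, biaffCl]
  · simp only [add_left_inj]
    split_ifs with h <;> congr 1 <;> ring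
  · congr 1; ring
  · congr 1; ring
  · split_ifs with h
    · subst h; congr 1; ring
    · rfl

lemma cl_phi (p : ℕ) (z : BiaffOmega p × BiaffOmega p) :
    biaffCl p (phiPerm p z.1, phiPerm p z.2) = biaffCl p z := by
  obtain ⟨⟨x₁,y₁⟩|⟨k₁,q₁⟩, ⟨x₂,y₂⟩|⟨k₂,q₂⟩⟩ := z <;>
    simp only [phiPerm, Equiv.coe_fn_mk, biaffCl]
  · split_ifs with h
    · subst h; congr 1; ring
    · rfl
  · congr 1; ring
  · congr 1; ring
  · simp only [sub_left_inj]
    split_ifs with h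
    · rfl
    · congr 1; ring

lemma cl_smul (p : ℕ) {g : Equiv.Perm (BiaffOmega p)} (hg : g ∈ biaffH p)
    (z : BiaffOmega p × BiaffOmega p) :
    biaffCl p (g z.1, g z.2) = biaffCl p z := by
  induction hg using Subgroup.closure_induction generalizing z with
  | mem x hx =>
    rcases hx with hx | hx
    · obtain ⟨a, b, rfl⟩ := hx; exact cl_t p a b z
    · simp only [Set.mem_singleton_iff] at hx; subst hx; exact cl_phi p z
  | one => simp
  | mul x y hx hy ihx ihy =>
    simp only [Equiv.Perm.mul_apply]
    rw [ihx (y z.1, y z.2)]; exact ihy z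
  | inv x hx ihx =>
    have := ihx (x⁻¹ z.1, x⁻¹ z.2)
    simpa using this.symm

lemma phi_pow_inl (p : ℕ) (n : ℕ) (x y : ZMod p) :
    (phiPerm p ^ n) (Sum.inl (x, y)) = Sum.inl (x, y - n * x) := by
  induction n generalizing y with
  | zero => simp
  | succ n ih =>
    rw [pow_succ, Equiv.Perm.mul_apply, show (phiPerm p) (Sum.inl (x, y))
      = Sum.inl (x, y - x) from rfl, ih]
    push_cast
    congr 1
    ring

lemma phi_pow_inr (p : ℕ) (n : ℕ) (k q : ZMod p) :
    (phiPerm p ^ n) (Sum.inr (k, q)) = Sum.inr (k - n, q) := by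
  induction n generalizing k with
  | zero => simp
  | succ n ih =>
    rw [pow_succ, Equiv.Perm.mul_apply, show (phiPerm p) (Sum.inr (k, q))
      = Sum.inr (k - 1, q) from rfl, ih]
    push_cast
    congr 2
    ring

lemma t_mem (p : ℕ) (a b : ZMod p) : tPerm p a b ∈ biaffH p :=
  Subgroup.subset_closure (Or.inl ⟨a, b, rfl⟩)

lemma phi_mem (p : ℕ) : phiPerm p ∈ biaffH p :=
  Subgroup.subset_closure (Or.inr rfl)

open RelKind in
def biaffCanon (p : ℕ) : RelKind × ZMod p → BiaffOmega p × BiaffOmega p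
  | (A, i) => (Sum.inl (0, 0), Sum.inl (0, i))
  | (B, i) => (Sum.inl (0, 0), Sum.inl (i, 0))
  | (C, i) => (Sum.inr (0, 0), Sum.inr (0, i))
  | (D, i) => (Sum.inr (0, 0), Sum.inr (i, 0))
  | (E, i) => (Sum.inl (0, 0), Sum.inr (0, i))
  | (F, i) => (Sum.inr (0, -i), Sum.inl (0, 0))

lemma cl_canon (p : ℕ) (w : RelKind × ZMod p) (hv : biaffValid p w) :
    biaffCl p (biaffCanon p w) = w := by
  obtain ⟨k, i⟩ := w
  cases k <;> simp_all [biaffCanon, biaffCl, biaffValid]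
  · intro h; exact absurd h.symm (by simpa using ‹_›)
  · intro h; exact absurd h.symm (by simpa using ‹_›)

lemma exists_smul_canon (p : ℕ) [Fact p.Prime] (z : BiaffOmega p × BiaffOmega p) :
    ∃ g ∈ biaffH p, (g z.1, g z.2) = biaffCanon p (biaffCl p z) := by
  obtain ⟨⟨x₁,y₁⟩|⟨k₁,q₁⟩, ⟨x₂,y₂⟩|⟨k₂,q₂⟩⟩ := z
  · by_cases h : x₁ = x₂
    · subst h
      refine ⟨tPerm p (-x₁) (-y₁), t_mem p _ _, ?_⟩
      simp only [tPerm, Equiv.coe_fn_mk, biaffCl, eq_self_iff_true, if_true, biaffCanon,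
        Prod.mk.injEq, Sum.inl.injEq]
      all_goals and_intros
      all_goals ring
    · refine ⟨phiPerm p ^ ((y₂ - y₁) * (x₂ - x₁)⁻¹).val * tPerm p (-x₁) (-y₁),
        mul_mem (pow_mem (phi_mem p) _) (t_mem p _ _), ?_⟩
      have hx : x₂ - x₁ ≠ 0 := sub_ne_zero.mpr (Ne.symm h)
      simp only [Equiv.Perm.mul_apply, tPerm, Equiv.coe_fn_mk, phi_pow_inl,
        biaffCl, if_neg h, biaffCanon, ZMod.natCast_val, ZMod.cast_id,
        Prod.mk.injEq, Sum.inl.injEq]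
      rw [show x₂ + -x₁ = x₂ - x₁ by ring]
      all_goals and_intros
      all_goals first | trivial | ring1 | (rw [mul_assoc, inv_mul_cancel₀ hx, mul_one]; ring)
  · -- E case
    refine ⟨tPerm p (-x₁) (k₂ * x₁ - y₁) * phiPerm p ^ k₂.val,
      mul_mem (t_mem p _ _) (pow_mem (phi_mem p) _), ?_⟩
    simp only [Equiv.Perm.mul_apply, phi_pow_inl, phi_pow_inr, tPerm,
      Equiv.coe_fn_mk, biaffCl, biaffCanon, ZMod.natCast_val, ZMod.cast_id,
      Prod.mk.injEq, Sum.inl.injEq, Sum.inr.injEq]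
    all_goals and_intros
    all_goals ring
  · -- F case
    refine ⟨tPerm p (-x₂) (k₁ * x₂ - y₂) * phiPerm p ^ k₁.val,
      mul_mem (t_mem p _ _) (pow_mem (phi_mem p) _), ?_⟩
    simp only [Equiv.Perm.mul_apply, phi_pow_inl, phi_pow_inr, tPerm,
      Equiv.coe_fn_mk, biaffCl, biaffCanon, ZMod.natCast_val, ZMod.cast_id,
      Prod.mk.injEq, Sum.inl.injEq, Sum.inr.injEq]
    all_goals and_intros
    all_goals ring
  · by_cases h : k₁ = k₂
    · subst h
      refine ⟨tPerm p 0 (-q₁) * phiPerm p ^ k₁.val,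
        mul_mem (t_mem p _ _) (pow_mem (phi_mem p) _), ?_⟩
      simp only [Equiv.Perm.mul_apply, phi_pow_inr, tPerm, Equiv.coe_fn_mk,
        biaffCl, eq_self_iff_true, if_true, biaffCanon, ZMod.natCast_val, ZMod.cast_id,
        Prod.mk.injEq, Sum.inr.injEq]
      all_goals and_intros
      all_goals ring
    · have hk : k₂ - k₁ ≠ 0 := sub_ne_zero.mpr (Ne.symm h)
      refine ⟨tPerm p ((q₂ - q₁) * (k₂ - k₁)⁻¹) (-q₁) * phiPerm p ^ k₁.val,
        mul_mem (t_mem p _ _) (pow_mem (phi_mem p) _), ?_⟩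
      simp only [Equiv.Perm.mul_apply, phi_pow_inr, tPerm, Equiv.coe_fn_mk,
        biaffCl, if_neg h, biaffCanon, ZMod.natCast_val, ZMod.cast_id,
        Prod.mk.injEq, Sum.inr.injEq]
      all_goals and_intros
      all_goals first | trivial | ring1 | (rw [mul_assoc, inv_mul_cancel₀ hk, mul_one]; ring)

lemma cl_smul' (p : ℕ) {g : Equiv.Perm (BiaffOmega p)} (hg : g ∈ biaffH p)
    (z₁ z₂ : BiaffOmega p) :
    biaffCl p (g z₁, g z₂) = biaffCl p (z₁, z₂) := cl_smul p hg (z₁, z₂)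

lemma sub_smul_eq (p : ℕ) (g : biaffH p) (z : BiaffOmega p × BiaffOmega p) :
    g • z = ((g : Equiv.Perm (BiaffOmega p)) z.1, (g : Equiv.Perm (BiaffOmega p)) z.2) := rfl

/-- The intransitive action of `H` on `Ω = P ∪ L` has exactly `6p - 2`
2-orbits; explicitly, the relations `A_i (i ∈ Z_p)`, `B_i (i ≠ 0)`,
`C_i (i ∈ Z_p)`, `D_i (i ≠ 0)`, `E_i (i ∈ Z_p)`, `F_i (i ∈ Z_p)` partition
`Ω × Ω` and each is invariant under the diagonal action of `H`. -/
theorem stmt17 (p : ℕ) (hp : p.Prime) (hodd : Odd p) :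
    Nat.card (Quotient (MulAction.orbitRel (biaffH p)
      (BiaffOmega p × BiaffOmega p))) = 6 * p - 2 ∧
    (∀ z : BiaffOmega p × BiaffOmega p, ∃! w : RelKind × ZMod p,
      ((w.1 = RelKind.B ∨ w.1 = RelKind.D) → w.2 ≠ 0) ∧
      z ∈ biaffRel p w.1 w.2) ∧
    (∀ g ∈ biaffH p, ∀ (k : RelKind) (i : ZMod p),
      ((k = RelKind.B ∨ k = RelKind.D) → i ≠ 0) →
      (fun z : BiaffOmega p × BiaffOmega p => (g z.1, g z.2)) '' biaffRel p k i
        = biaffRel p k i) := by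
  haveI := Fact.mk hp
  haveI : NeZero p := ⟨hp.pos.ne'⟩
  refine ⟨?_, ?_, ?_⟩
  · -- orbit count
    have hwd : ∀ z z' : BiaffOmega p × BiaffOmega p,
        MulAction.orbitRel (biaffH p) (BiaffOmega p × BiaffOmega p) z z' →
        biaffCl p z = biaffCl p z' := by
      intro z z' h
      rw [MulAction.orbitRel_apply, MulAction.mem_orbit_iff] at h
      obtain ⟨⟨g, hg⟩, rfl⟩ := h
      rw [sub_smul_eq]
      exact cl_smul p hg z'
    let f : Quotient (MulAction.orbitRel (biaffH p) (BiaffOmega p × BiaffOmega p)) →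
        {w : RelKind × ZMod p // biaffValid p w} :=
      Quotient.lift (fun z => ⟨biaffCl p z, cl_valid p z⟩)
        (fun z z' h => Subtype.ext (hwd z z' h))
    have hbij : Function.Bijective f := by
      constructor
      · intro a b
        induction a using Quotient.inductionOn with | h z =>
        induction b using Quotient.inductionOn with | h z' =>
        intro hab
        have hab' : biaffCl p z = biaffCl p z' := congrArg Subtype.val hab
        apply Quotient.sound
        show (MulAction.orbitRel (biaffH p) (BiaffOmega p × BiaffOmega p)) z z'
        rw [MulAction.orbitRel_apply, MulAction.mem_orbit_iff]
        obtain ⟨g, hg, hgz⟩ := exists_smul_canon p z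
        obtain ⟨g', hg', hgz'⟩ := exists_smul_canon p z'
        refine ⟨(⟨g, hg⟩ : biaffH p)⁻¹ * ⟨g', hg'⟩, ?_⟩
        have h1 : (⟨g, hg⟩ : biaffH p) • z = biaffCanon p (biaffCl p z) := by
          rw [sub_smul_eq]; exact hgz
        have h2 : (⟨g', hg'⟩ : biaffH p) • z' = biaffCanon p (biaffCl p z') := by
          rw [sub_smul_eq]; exact hgz'
        rw [mul_smul, h2, ← hab', ← h1, inv_smul_smul]
      · rintro ⟨w, hw⟩
        exact ⟨⟦biaffCanon p w⟧, Subtype.ext (cl_canon p w hw)⟩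
    rw [Nat.card_congr (Equiv.ofBijective f hbij), Nat.card_eq_fintype_card]
    have e : {w : RelKind × ZMod p // biaffValid p w} ≃
        {w : RelKind × ZMod p // ¬ (w = (B, 0) ∨ w = (D, 0))} :=
      Equiv.subtypeEquivRight (by
        rintro ⟨k, i⟩
        simp only [biaffValid, Prod.mk.injEq]
        cases k <;> simp)
    rw [Fintype.card_congr e, Fintype.card_subtype_compl, Fintype.card_prod,
      card_relKind, ZMod.card]
    have : Fintype.card {w : RelKind × ZMod p // w = (B, 0) ∨ w = (D, 0)} = 2 := by
      rw [← Nat.card_eq_fintype_card, Nat.card_eq_two_iff]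
      refine ⟨⟨(B, 0), Or.inl rfl⟩, ⟨(D, 0), Or.inr rfl⟩, by simp, ?_⟩
      apply Set.eq_univ_of_forall
      rintro ⟨w, (rfl | rfl)⟩ <;> simp
    rw [this]
  · intro z
    exact ⟨biaffCl p z, ⟨cl_valid p z, cl_mem p z⟩,
      fun w hw => cl_eq_of_mem p hw.1 hw.2⟩
  · intro g hg k i hvi
    ext u
    simp only [Set.mem_image]
    constructor
    · rintro ⟨z, hz, rfl⟩
      have hw := cl_eq_of_mem p (w := (k, i)) hvi hz
      have hm := cl_mem p (g z.1, g z.2)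
      rw [cl_smul p hg z, ← hw] at hm
      exact hm
    · intro hu
      refine ⟨(g⁻¹ u.1, g⁻¹ u.2), ?_, by simp⟩
      have hw := cl_eq_of_mem p (w := (k, i)) hvi hu
      have hm := cl_mem p (g⁻¹ u.1, g⁻¹ u.2)
      rw [cl_smul' p (inv_mem hg) u.1 u.2] at hm
      simp only [Prod.mk.eta, ← hw] at hm
      exact hm
end
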